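/- (Theorem: semi-invariants of filtered E_r-Dynkin quivers.) Let n ≥ 1 and r ∈ {6,7,8}, and let Q be an arbitrary orientation of the E_r-Dynkin graph: vertices 1,…,r and arrows a_1,…,a_{r−1}, where for α ≠ 4 the endpoint set of a_α is {α, α+1}, and the endpoint set of a_4 is {3, 5}. Let U_n^r act on 𝔟_n^{⊕(r−1)} by (u_1,…,u_r)·(A_1,…,A_{r−1}) = (u_{h(a_α)} A_α u_{t(a_α)}^{−1})_{α}. Then a polynomial function f on 𝔟_n^{⊕(r−1)} is invariant under this action if and only if there is a polynomial g in (r−1)·n variables such that f(A_1,…,A_{r−1}) = g(((A_α)_{ii})_{1≤α≤r−1, 1≤i≤n}) for all tuples of upper triangular matrices; that is, ℂ[F•Rep(Q,β)]^{𝕌_β} = ℂ[𝔱_n^{⊕(r−1)}] for β = (n,…,n). -/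

import Mathlib

/-!
Along the tree underlying `E_r`, the unipotent change of basis can be chosen vertex by vertex:
at each new vertex it is fixed so that the arrow attaching that vertex becomes diagonal. Hence
every tuple of upper triangular matrices with invertible diagonal lies in the `𝕌`-orbit of its
diagonal part, while the action never changes diagonal entries. An invariant polynomial
therefore agrees with its restriction to the diagonal on a Zariski-dense set, and so
everywhere; density is checked along the lines `A + t • 1`, which leave the invertible locus
for only finitely many `t`.
-/

/-- `M` is an upper triangular complex matrix (an element of `𝔟ₙ`). -/
def IsUT {n : ℕ} (M : Matrix (Fin n) (Fin n) ℂ) : Prop :=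
  ∀ i j : Fin n, j < i → M i j = 0

/-- `M` is a unipotent upper triangular complex matrix (an element of `Uₙ`). -/
def IsUnipUT {n : ℕ} (M : Matrix (Fin n) (Fin n) ℂ) : Prop :=
  IsUT M ∧ ∀ i : Fin n, M i i = 1

open Matrix

namespace Matrix.IsUpperTriangular

variable {m K : Type*} [Fintype m] [LinearOrder m] [Field K] {M N : Matrix m m K}

protected theorem mul (hM : M.IsUpperTriangular) (hN : N.IsUpperTriangular) :
    (M * N).IsUpperTriangular :=
  BlockTriangular.mul hM hN

theorem diag_mul (hM : M.IsUpperTriangular) (hN : N.IsUpperTriangular) :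
    (M * N).diag = M.diag * N.diag := by
  funext i
  refine (Finset.sum_eq_single i (fun k _ hki => ?_) (by simp)).trans rfl
  dsimp only
  rcases lt_or_gt_of_ne hki with h | h
  · rw [hM h, zero_mul]
  · rw [hN h, mul_zero]

variable [DecidableEq m]

theorem isUnit_det (hM : M.IsUpperTriangular) (h : ∀ i, M i i ≠ 0) : IsUnit M.det := by
  rw [det_of_isUpperTriangular hM]
  exact isUnit_iff_ne_zero.mpr (Finset.prod_ne_zero_iff.mpr fun i _ => h i)

theorem inv (hM : M.IsUpperTriangular) : M⁻¹.IsUpperTriangular := by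
  by_cases h : IsUnit M.det
  · have := M.invertibleOfIsUnitDet h
    exact blockTriangular_inv_of_blockTriangular hM
  · rw [nonsing_inv_apply_not_isUnit M h]
    exact blockTriangular_zero

theorem diag_inv (hM : M.IsUpperTriangular) (h : ∀ i, M i i ≠ 0) : M⁻¹.diag = M.diag⁻¹ := by
  have hinv : M⁻¹.diag * M.diag = 1 := by
    rw [← diag_mul hM.inv hM, nonsing_inv_mul M (hM.isUnit_det h), diag_one]
  funext i
  exact eq_inv_of_mul_eq_one_left (congr_fun hinv i)

end Matrix.IsUpperTriangular

theorem Matrix.isUpperTriangular_diagonal {m K : Type*} [DecidableEq m] [LinearOrder m] [Zero K]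
    (d : m → K) : (diagonal d).IsUpperTriangular :=
  blockTriangular_diagonal d

namespace MvPolynomial

variable {σ K : Type*} [Field K]

theorem exists_polynomial_eval_add_smul (P : MvPolynomial σ K) (x y : σ → K) :
    ∃ q : Polynomial K, ∀ t, eval (x + t • y) P = q.eval t := by
  refine ⟨aeval (fun i => Polynomial.C (x i) + Polynomial.C (y i) * Polynomial.X) P, fun t => ?_⟩
  have hline : x + t • y =
      fun i => Polynomial.aeval t (Polynomial.C (x i) + Polynomial.C (y i) * Polynomial.X) := by
    funext i
    simp only [Pi.add_apply, Pi.smul_apply, smul_eq_mul, map_add, map_mul, Polynomial.aeval_C,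
      Polynomial.aeval_X, Algebra.algebraMap_self, RingHom.id_apply, mul_comm]
  rw [← Polynomial.coe_aeval_eq_eval, comp_aeval_apply, ← hline]
  rfl

theorem eval_eq_of_eval_add_smul_eq [Infinite K] (P : MvPolynomial σ K) {x y x' y' : σ → K}
    (s : Finset K) (h : ∀ t ∉ s, eval (x + t • y) P = eval (x' + t • y') P) :
    eval x P = eval x' P := by
  obtain ⟨q, hq⟩ := exists_polynomial_eval_add_smul P x y
  obtain ⟨q', hq'⟩ := exists_polynomial_eval_add_smul P x' y'
  have hqq' : q = q' := by
    refine Polynomial.eq_of_infinite_eval_eq q q' (s.finite_toSet.infinite_compl.mono ?_)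
    intro t ht
    rw [Set.mem_ofPred_eq, ← hq, ← hq']
    exact h t ht
  simpa [← hq, ← hq'] using congr_arg (Polynomial.eval 0) hqq'

end MvPolynomial

section

variable {n : ℕ} {A M u w : Matrix (Fin n) (Fin n) ℂ}

theorem isUT_iff : IsUT M ↔ M.IsUpperTriangular :=
  ⟨fun h _ _ hij => h _ _ hij, fun h _ _ hij => h hij⟩

theorem isUnipUT_iff : IsUnipUT M ↔ M.IsUpperTriangular ∧ M.diag = 1 := by
  rw [IsUnipUT, isUT_iff, funext_iff]
  rfl

theorem IsUnipUT.apply_self_ne_zero (hu : IsUnipUT u) (i : Fin n) : u i i ≠ 0 := by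
  simp [hu.2 i]

theorem IsUnipUT.isUnit_det (hu : IsUnipUT u) : IsUnit u.det :=
  (isUT_iff.mp hu.1).isUnit_det hu.apply_self_ne_zero

theorem IsUT.isUT_mul_mul_inv (hA : IsUT A) (hu : IsUnipUT u) (hw : IsUnipUT w) :
    IsUT (u * A * w⁻¹) :=
  isUT_iff.mpr (((isUT_iff.mp hu.1).mul (isUT_iff.mp hA)).mul (isUT_iff.mp hw.1).inv)

theorem IsUT.diag_mul_mul_inv (hA : IsUT A) (hu : IsUnipUT u) (hw : IsUnipUT w) :
    (u * A * w⁻¹).diag = A.diag := by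
  have hw' := hw.apply_self_ne_zero
  rw [isUnipUT_iff] at hu hw
  rw [isUT_iff] at hA
  rw [(hu.1.mul hA).diag_mul hw.1.inv, hu.1.diag_mul hA, hw.1.diag_inv hw', hu.2, hw.2,
    one_mul, inv_one, mul_one]

theorem IsUnipUT.exists_mul_mul_inv_eq_diagonal_left (hw : IsUnipUT w) (hA : IsUT A)
    (hdiag : ∀ i, A i i ≠ 0) : ∃ x, IsUnipUT x ∧ x * A * w⁻¹ = diagonal A.diag := by
  rw [isUT_iff] at hA
  refine ⟨diagonal A.diag * w * A⁻¹, isUnipUT_iff.mpr ⟨?_, ?_⟩, ?_⟩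
  · exact ((isUpperTriangular_diagonal _).mul (isUT_iff.mp hw.1)).mul hA.inv
  · rw [((isUpperTriangular_diagonal _).mul (isUT_iff.mp hw.1)).diag_mul hA.inv,
      (isUpperTriangular_diagonal _).diag_mul (isUT_iff.mp hw.1), hA.diag_inv hdiag]
    funext i
    simp [hw.2 i, hdiag i]
  · rw [nonsing_inv_mul_cancel_right _ _ (hA.isUnit_det hdiag),
      mul_nonsing_inv_cancel_right _ _ hw.isUnit_det]

theorem IsUnipUT.exists_mul_mul_inv_eq_diagonal_right (hw : IsUnipUT w) (hA : IsUT A)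
    (hdiag : ∀ i, A i i ≠ 0) : ∃ y, IsUnipUT y ∧ w * A * y⁻¹ = diagonal A.diag := by
  rw [isUT_iff] at hA
  have hD : (diagonal A.diag).IsUpperTriangular := isUpperTriangular_diagonal _
  refine ⟨(diagonal A.diag)⁻¹ * w * A, isUnipUT_iff.mpr ⟨?_, ?_⟩, ?_⟩
  · exact (hD.inv.mul (isUT_iff.mp hw.1)).mul hA
  · rw [(hD.inv.mul (isUT_iff.mp hw.1)).diag_mul hA, hD.inv.diag_mul (isUT_iff.mp hw.1),
      hD.diag_inv (by simpa using hdiag)]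
    funext i
    simp [hw.2 i, hdiag i]
  · rw [Matrix.mul_inv_rev, Matrix.mul_inv_rev,
      nonsing_inv_nonsing_inv _ (hD.isUnit_det (by simpa using hdiag)), ← mul_assoc, ← mul_assoc,
      mul_nonsing_inv_cancel_right _ _ (hA.isUnit_det hdiag),
      mul_nonsing_inv _ hw.isUnit_det, one_mul]

theorem exists_isUnipUT_gauge_eq_diagonal_of_lt {m r : ℕ} (tl hd : Fin m → Fin r)
    (htree : ∀ α : Fin m, ∃ p ≤ (α : ℕ),
      ((tl α : ℕ) = p ∧ (hd α : ℕ) = α + 1) ∨ ((tl α : ℕ) = α + 1 ∧ (hd α : ℕ) = p))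
    (A : Fin m → Matrix (Fin n) (Fin n) ℂ) (hA : ∀ α, IsUT (A α)) (hdiag : ∀ α i, A α i i ≠ 0)
    (k : ℕ) : ∃ u : Fin r → Matrix (Fin n) (Fin n) ℂ, (∀ v, IsUnipUT (u v)) ∧
      ∀ α : Fin m, (α : ℕ) < k → u (hd α) * A α * (u (tl α))⁻¹ = diagonal (A α).diag := by
  classical
  induction k with
  | zero => exact ⟨1, fun _ => isUnipUT_iff.mpr ⟨isUpperTriangular_diagonal _, diag_one⟩,
      fun _ h => absurd h (Nat.not_lt_zero _)⟩
  | succ k ih =>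
    obtain ⟨u, hu, hk⟩ := ih
    by_cases hkm : k < m
    swap
    · exact ⟨u, hu, fun α hα => hk α (by omega)⟩
    set α : Fin m := ⟨k, hkm⟩
    -- the arrow `α` attaches the new vertex `k + 1` to the vertices already gauged
    have extend : ∀ v : Fin r, (v : ℕ) = k + 1 → ∀ x, IsUnipUT x →
        Function.update u v x (hd α) * A α * (Function.update u v x (tl α))⁻¹ =
          diagonal (A α).diag →
        ∃ u' : Fin r → Matrix (Fin n) (Fin n) ℂ, (∀ v, IsUnipUT (u' v)) ∧ ∀ β : Fin m,
          (β : ℕ) < k + 1 → u' (hd β) * A β * (u' (tl β))⁻¹ = diagonal (A β).diag := by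
      intro v hv x hx hαx
      refine ⟨Function.update u v x, (Function.forall_update_iff u fun _ w => IsUnipUT w).mpr
        ⟨hx, fun w _ => hu w⟩, fun β hβ => ?_⟩
      obtain hβ | hβ := Nat.lt_succ_iff_lt_or_eq.mp hβ
      · obtain ⟨p, hp, hβp⟩ := htree β
        rw [Function.update_of_ne (by omega), Function.update_of_ne (by omega)]
        exact hk β hβ
      · obtain rfl : β = α := Fin.ext hβ
        exact hαx
    obtain ⟨p, hp, ⟨ht, hh⟩ | ⟨ht, hh⟩⟩ := htree α
    · obtain ⟨x, hx, hxA⟩ := (hu (tl α)).exists_mul_mul_inv_eq_diagonal_left (hA α) (hdiag α)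
      exact extend (hd α) hh x hx (by
        rwa [Function.update_self, Function.update_of_ne (by omega)])
    · obtain ⟨y, hy, hyA⟩ := (hu (hd α)).exists_mul_mul_inv_eq_diagonal_right (hA α) (hdiag α)
      exact extend (tl α) ht y hy (by
        rwa [Function.update_self, Function.update_of_ne (by omega)])

theorem exists_isUnipUT_gauge_eq_diagonal {m r : ℕ} (tl hd : Fin m → Fin r)
    (htree : ∀ α : Fin m, ∃ p ≤ (α : ℕ),
      ((tl α : ℕ) = p ∧ (hd α : ℕ) = α + 1) ∨ ((tl α : ℕ) = α + 1 ∧ (hd α : ℕ) = p))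
    (A : Fin m → Matrix (Fin n) (Fin n) ℂ) (hA : ∀ α, IsUT (A α)) (hdiag : ∀ α i, A α i i ≠ 0) :
    ∃ u : Fin r → Matrix (Fin n) (Fin n) ℂ, (∀ v, IsUnipUT (u v)) ∧
      ∀ α, u (hd α) * A α * (u (tl α))⁻¹ = diagonal (A α).diag := by
  obtain ⟨u, hu, h⟩ := exists_isUnipUT_gauge_eq_diagonal_of_lt tl hd htree A hA hdiag m
  exact ⟨u, hu, fun α => h α α.isLt⟩

theorem eq_diagonal_of_forall_diag_ne_zero {ι : Type*} [Fintype ι]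
    {f : (ι → Matrix (Fin n) (Fin n) ℂ) → ℂ}
    (hf : ∃ P : MvPolynomial (ι × Fin n × Fin n) ℂ,
      ∀ A, f A = MvPolynomial.eval (fun q => A q.1 q.2.1 q.2.2) P)
    (h : ∀ A : ι → Matrix (Fin n) (Fin n) ℂ, (∀ α, IsUT (A α)) → (∀ α i, A α i i ≠ 0) →
      f A = f fun α => diagonal (A α).diag)
    (A : ι → Matrix (Fin n) (Fin n) ℂ) (hA : ∀ α, IsUT (A α)) :
    f A = f fun α => diagonal (A α).diag := by
  classical
  obtain ⟨P, hP⟩ := hf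
  -- move along the line `A + t • 1`, which has invertible diagonal for all but finitely many `t`
  rw [hP, hP]
  refine MvPolynomial.eval_eq_of_eval_add_smul_eq P
    (y := fun q => (1 : Matrix _ _ ℂ) q.2.1 q.2.2) (y' := fun q => (1 : Matrix _ _ ℂ) q.2.1 q.2.2)
    (Finset.univ.image fun q : ι × Fin n => -A q.1 q.2 q.2) fun t ht => ?_
  have hUT : ∀ α, IsUT ((A + t • 1) α) := fun α i j hij => by
    simp [hA α i j hij, one_apply_ne hij.ne']
  have hne : ∀ α i, (A + t • 1) α i i ≠ 0 := fun α i hzero => ht <| by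
    simp only [Finset.mem_image, Finset.mem_univ, true_and]
    exact ⟨(α, i), by simpa [add_eq_zero_iff_neg_eq] using hzero⟩
  have hdiag : (fun α => diagonal ((A + t • 1) α).diag) =
      (fun α => diagonal (A α).diag) + t • 1 := by
    funext α
    ext i j
    by_cases hij : i = j <;> simp [hij]
  have := h _ hUT hne
  rw [hdiag, hP, hP] at this
  exact this

theorem exists_mvPolynomial_eval_diagonal {ι : Type*} {f : (ι → Matrix (Fin n) (Fin n) ℂ) → ℂ}
    (hf : ∃ P : MvPolynomial (ι × Fin n × Fin n) ℂ,
      ∀ A, f A = MvPolynomial.eval (fun q => A q.1 q.2.1 q.2.2) P) :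
    ∃ g : MvPolynomial (ι × Fin n) ℂ, ∀ A : ι → Matrix (Fin n) (Fin n) ℂ,
      f (fun α => diagonal (A α).diag) = MvPolynomial.eval (fun q => A q.1 q.2 q.2) g := by
  classical
  obtain ⟨P, hP⟩ := hf
  refine ⟨MvPolynomial.bind₁
    (fun q => if q.2.1 = q.2.2 then MvPolynomial.X (q.1, q.2.1) else 0) P, fun A => ?_⟩
  have hcoords : (fun q : ι × Fin n × Fin n => diagonal (A q.1).diag q.2.1 q.2.2) =
      fun q => MvPolynomial.eval (fun q => A q.1 q.2 q.2)
        (if q.2.1 = q.2.2 then MvPolynomial.X (q.1, q.2.1) else 0 :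
          MvPolynomial (ι × Fin n) ℂ) := by
    funext ⟨α, i, j⟩
    by_cases hij : i = j <;> simp [hij]
  rw [hP, hcoords]
  exact (MvPolynomial.eval₂Hom_bind₁ _ _ _ _).symm

end

theorem semiInvariants_filtered_Er_Dynkin_quiver_general
    (n r : ℕ)
    (tl hd : Fin (r - 1) → Fin r)
    (hor : ∀ α : Fin (r - 1),
      ((α : ℕ) ≠ 3 →
        (((tl α : ℕ) = (α : ℕ) ∧ (hd α : ℕ) = (α : ℕ) + 1) ∨
         ((tl α : ℕ) = (α : ℕ) + 1 ∧ (hd α : ℕ) = (α : ℕ)))) ∧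
      ((α : ℕ) = 3 →
        (((tl α : ℕ) = 2 ∧ (hd α : ℕ) = 4) ∨
         ((tl α : ℕ) = 4 ∧ (hd α : ℕ) = 2))))
    (f : (Fin (r - 1) → Matrix (Fin n) (Fin n) ℂ) → ℂ)
    (hf : ∃ P : MvPolynomial (Fin (r - 1) × Fin n × Fin n) ℂ,
      ∀ A, f A = MvPolynomial.eval (fun q => A q.1 q.2.1 q.2.2) P) :
    (∀ u : Fin r → Matrix (Fin n) (Fin n) ℂ, (∀ v, IsUnipUT (u v)) →
        ∀ A : Fin (r - 1) → Matrix (Fin n) (Fin n) ℂ, (∀ α, IsUT (A α)) →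
          f (fun α => u (hd α) * A α * (u (tl α))⁻¹) = f A) ↔
      ∃ g : MvPolynomial (Fin (r - 1) × Fin n) ℂ,
        ∀ A : Fin (r - 1) → Matrix (Fin n) (Fin n) ℂ, (∀ α, IsUT (A α)) →
          f A = MvPolynomial.eval (fun q => A q.1 q.2 q.2) g := by
  have htree : ∀ α : Fin (r - 1), ∃ p ≤ (α : ℕ),
      ((tl α : ℕ) = p ∧ (hd α : ℕ) = α + 1) ∨ ((tl α : ℕ) = α + 1 ∧ (hd α : ℕ) = p) := fun α =>
    ⟨if (α : ℕ) = 3 then 2 else α, by split_ifs <;> omega, by have := hor α; split_ifs <;> omega⟩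
  constructor
  · intro hinv
    obtain ⟨g, hg⟩ := exists_mvPolynomial_eval_diagonal hf
    refine ⟨g, fun A hA => ?_⟩
    rw [← hg]
    refine eq_diagonal_of_forall_diag_ne_zero hf (fun B hB hdiag => ?_) A hA
    obtain ⟨u, hu, hgauge⟩ := exists_isUnipUT_gauge_eq_diagonal tl hd htree B hB hdiag
    rw [← hinv u hu B hB]
    simp only [hgauge]
  · rintro ⟨g, hg⟩ u hu A hA
    have hdiag : (fun q : Fin (r - 1) × Fin n => (u (hd q.1) * A q.1 * (u (tl q.1))⁻¹) q.2 q.2) =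
        fun q => A q.1 q.2 q.2 :=
      funext fun q => congr_fun ((hA q.1).diag_mul_mul_inv (hu _) (hu _)) q.2
    rw [hg _ fun α => (hA α).isUT_mul_mul_inv (hu _) (hu _), hg A hA, hdiag]

/-- Semi-invariants of filtered `E_r`-Dynkin quivers (`r ∈ {6,7,8}`):
for any orientation of the `E_r`-Dynkin graph (vertices `Fin r` in 0-indexed form,
arrows `Fin (r-1)`; for `α ≠ 3` the `α`-th arrow joins `α` and `α+1`, and the arrow of
index `3` (the branch arrow, `a_4` in 1-indexed form) joins `2` and `4`), a polynomial
function on `𝔟ₙ^{⊕(r-1)}` is invariant under the change-of-basis action of `Uₙ^r` iff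
it is a polynomial in the diagonal entries; i.e.
`ℂ[F•Rep(Q,β)]^{𝕌_β} = ℂ[𝔱ₙ^{⊕(r-1)}]`. -/
theorem semiInvariants_filtered_Er_Dynkin_quiver
    (n r : ℕ) (hn : 1 ≤ n) (hr : r = 6 ∨ r = 7 ∨ r = 8)
    (tl hd : Fin (r - 1) → Fin r)
    (hor : ∀ α : Fin (r - 1),
      ((α : ℕ) ≠ 3 →
        (((tl α : ℕ) = (α : ℕ) ∧ (hd α : ℕ) = (α : ℕ) + 1) ∨
         ((tl α : ℕ) = (α : ℕ) + 1 ∧ (hd α : ℕ) = (α : ℕ)))) ∧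
      ((α : ℕ) = 3 →
        (((tl α : ℕ) = 2 ∧ (hd α : ℕ) = 4) ∨
         ((tl α : ℕ) = 4 ∧ (hd α : ℕ) = 2))))
    (f : (Fin (r - 1) → Matrix (Fin n) (Fin n) ℂ) → ℂ)
    (hf : ∃ P : MvPolynomial (Fin (r - 1) × Fin n × Fin n) ℂ,
      ∀ A, f A = MvPolynomial.eval (fun q => A q.1 q.2.1 q.2.2) P) :
    (∀ u : Fin r → Matrix (Fin n) (Fin n) ℂ, (∀ v, IsUnipUT (u v)) →
        ∀ A : Fin (r - 1) → Matrix (Fin n) (Fin n) ℂ, (∀ α, IsUT (A α)) →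
          f (fun α => u (hd α) * A α * (u (tl α))⁻¹) = f A) ↔
      ∃ g : MvPolynomial (Fin (r - 1) × Fin n) ℂ,
        ∀ A : Fin (r - 1) → Matrix (Fin n) (Fin n) ℂ, (∀ α, IsUT (A α)) →
          f A = MvPolynomial.eval (fun q => A q.1 q.2 q.2) g :=
  semiInvariants_filtered_Er_Dynkin_quiver_general n r tl hd hor f hf
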